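/- arXiv:2306.09977 — 3 statements merged into one kernel-verified Lean document; each statement's English description precedes it below -/
import Mathlib

section
/- Let Z = {Z_1,…,Z_m} be independent real random variables, let q ∈ (0, 1/2] and x_0 ∈ ℝ satisfy P[Z_j ≥ x_0] ≤ q and P[Z_j ≤ −x_0] ≤ q for every j = 1,…,m. Then for any p_0 ∈ (q + 1/m, 1/2], P[ −x_0 < Z^{(⌈(1−p_0)m⌉)} ≤ Z^{(⌊p_0 m⌋)} < x_0 ] ≥ 1 − 2 exp{ −2m (p_0 − q − 1/m)² }. -/
open MeasureTheory ProbabilityTheory Finset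
open scoped ENNReal

/-- The `t`-th largest element of a finite multiset of reals (so `ordStat s 1` is the
maximum): sorting increasingly, it is the entry at 0-based position `card − t`. -/
noncomputable def ordStat (s : Multiset ℝ) (t : ℕ) : ℝ :=
  (s.sort (· ≤ ·)).getD (Multiset.card s - t) 0

section Aux


lemma hoeff_aux (p : ℝ) (hp0 : 0 ≤ p) (hp1 : p ≤ 1) (t : ℝ) :
    1 - p + p * Real.exp t ≤ Real.exp (p * t + t ^ 2 / 8) := by
  set v : ℝ → ℝ := fun t => 1 - p + p * Real.exp t with hv
  have hvpos : ∀ s, 0 < v s := by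
    intro s
    rcases eq_or_lt_of_le hp1 with h | h
    · simp [hv, ← h]; positivity
    · have : 0 < 1 - p := by linarith
      have : 0 ≤ p * Real.exp s := by positivity
      simp only [hv]; linarith
  -- derivative facts
  have hvd : ∀ s, HasDerivAt v (p * Real.exp s) s := by
    intro s
    exact ((Real.hasDerivAt_exp s).const_mul p).const_add (1 - p)
  set f : ℝ → ℝ := fun s => p * s + s ^ 2 / 8 - Real.log (v s) with hf
  set f1 : ℝ → ℝ := fun s => p + s / 4 - p * Real.exp s / v s with hf1
  have hfd : ∀ s, HasDerivAt f (f1 s) s := by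
    intro s
    have h1 : HasDerivAt (fun s : ℝ => p * s + s ^ 2 / 8) (p + s * 2 / 8) s := by
      have := ((hasDerivAt_pow 2 s).div_const 8).const_add 0
      have h2 : HasDerivAt (fun s : ℝ => p * s) p s := by
        simpa using (hasDerivAt_id s).const_mul p
      exact (h2.add ((hasDerivAt_pow 2 s).div_const 8)).congr_deriv (by push_cast; ring)
    have h3 : HasDerivAt (fun s => Real.log (v s)) (p * Real.exp s / v s) s :=
      (hvd s).log (hvpos s).ne'
    have := h1.sub h3
    exact this.congr_deriv (by simp only [hf1]; ring)
  have hf1d : ∀ s, HasDerivAt f1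
      (1 / 4 - (p * Real.exp s * v s - p * Real.exp s * (p * Real.exp s)) / (v s) ^ 2) s := by
    intro s
    have h1 : HasDerivAt (fun s : ℝ => p + s / 4) (1 / 4) s := by
      simpa using ((hasDerivAt_id s).div_const 4).const_add p
    have h2 : HasDerivAt (fun s => p * Real.exp s) (p * Real.exp s) s :=
      (Real.hasDerivAt_exp s).const_mul p
    have h3 := h2.div (hvd s) (hvpos s).ne'
    exact h1.sub h3
  have hf1nonneg : ∀ s, 0 ≤ 1 / 4 -
      (p * Real.exp s * v s - p * Real.exp s * (p * Real.exp s)) / (v s) ^ 2 := by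
    intro s
    have hv2 : (0:ℝ) < (v s) ^ 2 := pow_pos (hvpos s) 2
    rw [sub_nonneg, div_le_iff₀ hv2]
    have hnum : p * Real.exp s * v s - p * Real.exp s * (p * Real.exp s)
        = (p * Real.exp s) * (1 - p) := by simp only [hv]; ring
    rw [hnum]
    have key : 0 ≤ ((1 - p) - p * Real.exp s) ^ 2 := sq_nonneg _
    have : (v s) ^ 2 = ((1 - p) - p * Real.exp s) ^ 2 + 4 * ((p * Real.exp s) * (1 - p)) := by
      simp only [hv]; ring
    nlinarith
  -- f1 is monotone
  have hf1mono : Monotone f1 := by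
    apply monotone_of_deriv_nonneg
    · exact fun s => (hf1d s).differentiableAt
    · intro s
      rw [(hf1d s).deriv]
      exact hf1nonneg s
  have hf10 : f1 0 = 0 := by
    simp only [hf1, hv]
    field_simp
    rw [Real.exp_zero]; ring
  have hf0 : f 0 = 0 := by simp [hf, hv]
  -- f is nonneg
  have hfnonneg : ∀ s, 0 ≤ f s := by
    intro s
    rcases le_or_gt 0 s with h | h
    · have : MonotoneOn f (Set.Ici 0) := by
        apply monotoneOn_of_deriv_nonneg (convex_Ici 0)
        · exact Continuous.continuousOn (by
            have : ∀ s, DifferentiableAt ℝ f s := fun s => (hfd s).differentiableAt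
            exact (Differentiable.continuous (fun s => this s)))
        · intro s _
          exact ((hfd s).differentiableAt).differentiableWithinAt
        · intro s hs
          rw [(hfd s).deriv]
          rw [← hf10]
          exact hf1mono (le_of_lt (by simpa using hs))
      have := this (Set.self_mem_Ici) (Set.mem_Ici.mpr h) h
      rwa [hf0] at this
    · have : AntitoneOn f (Set.Iic 0) := by
        apply antitoneOn_of_deriv_nonpos (convex_Iic 0)
        · exact Continuous.continuousOn (by
            have : ∀ s, DifferentiableAt ℝ f s := fun s => (hfd s).differentiableAt
            exact (Differentiable.continuous (fun s => this s)))
        · intro s _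
          exact ((hfd s).differentiableAt).differentiableWithinAt
        · intro s hs
          rw [(hfd s).deriv]
          rw [← hf10]
          exact hf1mono (le_of_lt (by simpa using hs))
      have := this (Set.mem_Iic.mpr h.le) (Set.self_mem_Iic) h.le
      rwa [hf0] at this
  have := hfnonneg t
  have hlog : Real.log (v t) ≤ p * t + t ^ 2 / 8 := by
    simp only [hf] at this; linarith
  calc v t = Real.exp (Real.log (v t)) := (Real.exp_log (hvpos t)).symm
    _ ≤ Real.exp (p * t + t ^ 2 / 8) := Real.exp_le_exp.mpr hlog

lemma bernoulli_chernoff {m : ℕ} {Ω : Type} [MeasurableSpace Ω] (P : Measure Ω)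
    [IsProbabilityMeasure P] (X : Fin m → Ω → ℝ)
    (hX : ∀ j, Measurable (X j))
    (hval : ∀ j ω, X j ω = 0 ∨ X j ω = 1)
    (hind : iIndepFun X P)
    (q : ℝ) (hq0 : 0 ≤ q) (hq1 : q ≤ 1)
    (hq : ∀ j, P {ω | X j ω = 1} ≤ ENNReal.ofReal q)
    (ε : ℝ) (hε : 0 ≤ ε) :
    P {ω | (q + ε) * m ≤ ∑ j, X j ω} ≤ ENNReal.ofReal (Real.exp (-2 * m * ε ^ 2)) := by
  set t : ℝ := 4 * ε with ht
  have ht0 : 0 ≤ t := by positivity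
  set S : Ω → ℝ := ∑ j, X j with hS
  have hSapp : ∀ ω, S ω = ∑ j, X j ω := fun ω => by simp [hS]
  -- integrability of exp(t * X j) and exp(t * S)
  have hbdd : ∀ j ω, |Real.exp (t * X j ω)| ≤ Real.exp t := by
    intro j ω
    rw [abs_of_pos (Real.exp_pos _)]
    apply Real.exp_le_exp.mpr
    rcases hval j ω with h | h <;> simp [h] <;> nlinarith [Real.exp_pos t]
  have hint : ∀ j, Integrable (fun ω => Real.exp (t * X j ω)) P := by
    intro j
    apply Integrable.mono' (integrable_const (Real.exp t))
      (((hX j).const_mul t).exp.aestronglyMeasurable)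
    exact Filter.Eventually.of_forall fun ω => hbdd j ω
  have hintS : Integrable (fun ω => Real.exp (t * S ω)) P := by
    rw [hS]
    exact hind.integrable_exp_mul_sum hX (fun j _ => hint j)
  -- Chernoff:
  have hch := measure_ge_le_exp_mul_mgf (μ := P) (X := S) ((q + ε) * m) ht0 hintS
  -- compute mgf of each X j
  have hmgf : ∀ j, mgf (X j) P t ≤ 1 - q + q * Real.exp t := by
    intro j
    have hAmeas : MeasurableSet {ω | X j ω = 1} := (hX j) (measurableSet_singleton 1)
    set pj : ℝ := (P {ω | X j ω = 1}).toReal with hpj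
    have hpj0 : 0 ≤ pj := ENNReal.toReal_nonneg
    have hpjq : pj ≤ q := by
      rw [hpj]
      exact ENNReal.toReal_le_of_le_ofReal hq0 (hq j)
    have heq : (fun ω => Real.exp (t * X j ω))
        = fun ω => Set.indicator {ω | X j ω = 1} (fun _ => Real.exp t - 1) ω + 1 := by
      funext ω
      rcases hval j ω with h | h
      · have : ω ∉ {ω | X j ω = 1} := by simp [Set.mem_setOf_eq, h]
        simp [h, Set.indicator_of_notMem this]
      · have : ω ∈ {ω | X j ω = 1} := by simp [Set.mem_setOf_eq, h]
        simp [h, Set.indicator_of_mem this]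
    have : mgf (X j) P t = (Real.exp t - 1) * pj + 1 := by
      rw [mgf, heq]
      rw [integral_add ((integrable_const _).indicator hAmeas) (integrable_const 1)]
      rw [integral_indicator_const _ hAmeas]
      simp [hpj, mul_comm, measureReal_def]
    rw [this]
    have h1 : (1:ℝ) ≤ Real.exp t := Real.one_le_exp ht0
    nlinarith
  have hmgfS : mgf S P t ≤ (1 - q + q * Real.exp t) ^ m := by
    rw [hS, hind.mgf_sum hX]
    calc ∏ j : Fin m, mgf (X j) P t ≤ ∏ _j : Fin m, (1 - q + q * Real.exp t) := by
          apply Finset.prod_le_prod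
          · exact fun j _ => mgf_nonneg
          · exact fun j _ => hmgf j
      _ = (1 - q + q * Real.exp t) ^ m := by simp
  -- combine
  have hbound : Real.exp (-t * ((q + ε) * m)) * mgf S P t ≤ Real.exp (-2 * m * ε ^ 2) := by
    have h1 : mgf S P t ≤ Real.exp (q * t + t ^ 2 / 8) ^ m := by
      refine hmgfS.trans ?_
      apply pow_le_pow_left₀
      · nlinarith [Real.exp_pos t, hq0, hq1, Real.one_le_exp ht0]
      · exact hoeff_aux q hq0 hq1 t
    calc Real.exp (-t * ((q + ε) * m)) * mgf S P t
        ≤ Real.exp (-t * ((q + ε) * m)) * Real.exp (q * t + t ^ 2 / 8) ^ m := by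
          apply mul_le_mul_of_nonneg_left h1 (Real.exp_pos _).le
      _ = Real.exp (-t * ((q + ε) * m) + m * (q * t + t ^ 2 / 8)) := by
          rw [← Real.exp_nat_mul, ← Real.exp_add]
      _ ≤ Real.exp (-2 * m * ε ^ 2) := by
          apply Real.exp_le_exp.mpr
          have : -t * ((q + ε) * m) + m * (q * t + t ^ 2 / 8) = -2 * m * ε ^ 2 := by
            rw [ht]; ring
          linarith [this.le]
  have hset : {ω | (q + ε) * (m:ℝ) ≤ ∑ j, X j ω} = {ω | (q + ε) * (m:ℝ) ≤ S ω} := by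
    ext ω; simp [hSapp]
  rw [hset, ENNReal.le_ofReal_iff_toReal_le (measure_ne_top _ _) (Real.exp_pos _).le]
  exact hch.trans hbound

lemma count_ge_of_getD_ge (l : List ℝ) (hl : l.Pairwise (· ≤ ·)) (i : ℕ) (hi : i < l.length)
    (x : ℝ) (h : x ≤ l.getD i 0) :
    l.length - i ≤ l.countP (fun y => decide (x ≤ y)) := by
  have hget : x ≤ l.get ⟨i, hi⟩ := by rwa [List.getD_eq_get _ _ ⟨i, hi⟩] at h
  have hdropall : ∀ a ∈ l.drop i, x ≤ a := by
    have hdrop : l.drop i = l.get ⟨i, hi⟩ :: l.drop (i + 1) := by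
      simpa using List.drop_eq_getElem_cons hi
    have hsorted : (l.drop i).Pairwise (· ≤ ·) := hl.sublist (List.drop_sublist i l)
    rw [hdrop] at hsorted ⊢
    intro a ha
    rcases List.mem_cons.mp ha with rfl | ha
    · exact hget
    · exact hget.trans (List.rel_of_pairwise_cons hsorted ha)
  have hdropcount : (l.drop i).countP (fun y => decide (x ≤ y)) = (l.drop i).length := by
    rw [List.countP_eq_length]
    intro a ha
    simpa using hdropall a ha
  calc l.length - i = (l.drop i).length := List.length_drop.symm
    _ = (l.drop i).countP (fun y => decide (x ≤ y)) := hdropcount.symm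
    _ ≤ l.countP (fun y => decide (x ≤ y)) := by
        conv_rhs => rw [← List.take_append_drop i l]
        rw [List.countP_append]
        omega

lemma count_ge_of_getD_le (l : List ℝ) (hl : l.Pairwise (· ≤ ·)) (i : ℕ) (hi : i < l.length)
    (y : ℝ) (h : l.getD i 0 ≤ y) :
    i + 1 ≤ l.countP (fun z => decide (z ≤ y)) := by
  have hget : l.get ⟨i, hi⟩ ≤ y := by rwa [List.getD_eq_get _ _ ⟨i, hi⟩] at h
  have htakeall : ∀ a ∈ l.take (i + 1), a ≤ y := by
    intro a ha
    obtain ⟨j, hj, rfl⟩ := List.mem_take_iff_getElem.mp ha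
    have hj' : j ≤ i := by omega
    have hjl : j < l.length := by omega
    have : l.get ⟨j, hjl⟩ ≤ l.get ⟨i, hi⟩ := hl.rel_get_of_le hj'
    simpa using this.trans hget
  have htakecount : (l.take (i + 1)).countP (fun z => decide (z ≤ y))
      = (l.take (i + 1)).length := by
    rw [List.countP_eq_length]
    intro a ha
    simpa using htakeall a ha
  have hlen : (l.take (i + 1)).length = i + 1 := by
    rw [List.length_take]; omega
  calc i + 1 = (l.take (i + 1)).countP (fun z => decide (z ≤ y)) := by rw [htakecount, hlen]
    _ ≤ l.countP (fun z => decide (z ≤ y)) := by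
        conv_rhs => rw [← List.take_append_drop (i + 1) l]
        rw [List.countP_append]
        omega

lemma getD_mono_of_sorted (l : List ℝ) (hl : l.Pairwise (· ≤ ·)) (i j : ℕ) (hij : i ≤ j)
    (hj : j < l.length) : l.getD i 0 ≤ l.getD j 0 := by
  have hi : i < l.length := lt_of_le_of_lt hij hj
  rw [List.getD_eq_get _ _ ⟨i, hi⟩, List.getD_eq_get _ _ ⟨j, hj⟩]
  exact hl.rel_get_of_le hij

end Aux


/-- if `Z_1,…,Z_m` are independent real random variables with
`P[Z_j ≥ x₀] ≤ q` and `P[Z_j ≤ −x₀] ≤ q` for all `j`, where `q ∈ (0,1/2]`, then for any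
`p₀ ∈ (q + 1/m, 1/2]`,
`P[−x₀ < Z^{(⌈(1−p₀)m⌉)} ≤ Z^{(⌊p₀m⌋)} < x₀] ≥ 1 − 2 exp(−2m(p₀ − q − 1/m)²)`. -/


theorem order_statistics_concentration
    (m : ℕ) (hm : 0 < m)
    (Ω : Type) [MeasurableSpace Ω] (P : Measure Ω) [IsProbabilityMeasure P]
    (Z : Fin m → Ω → ℝ)
    (hmeas : ∀ j, Measurable (Z j))
    (hindep : iIndepFun Z P)
    (q x₀ : ℝ) (hq : 0 < q) (hq' : q ≤ 1 / 2)
    (hup : ∀ j, P {ω | x₀ ≤ Z j ω} ≤ ENNReal.ofReal q)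
    (hdown : ∀ j, P {ω | Z j ω ≤ -x₀} ≤ ENNReal.ofReal q)
    (p₀ : ℝ) (hp₀ : q + 1 / (m : ℝ) < p₀) (hp₀' : p₀ ≤ 1 / 2) :
    ENNReal.ofReal (1 - 2 * Real.exp (-2 * (m : ℝ) * (p₀ - q - 1 / (m : ℝ)) ^ 2))
      ≤ P {ω |
          -x₀ < ordStat (Multiset.map (fun j => Z j ω) Finset.univ.val) ⌈(1 - p₀) * (m : ℝ)⌉₊
          ∧ ordStat (Multiset.map (fun j => Z j ω) Finset.univ.val) ⌈(1 - p₀) * (m : ℝ)⌉₊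
              ≤ ordStat (Multiset.map (fun j => Z j ω) Finset.univ.val) ⌊p₀ * (m : ℝ)⌋₊
          ∧ ordStat (Multiset.map (fun j => Z j ω) Finset.univ.val) ⌊p₀ * (m : ℝ)⌋₊ < x₀} := by
  have hm' : (0:ℝ) < m := Nat.cast_pos.mpr hm
  set ε : ℝ := p₀ - q - 1 / m with hε_def
  have hε : 0 < ε := by rw [hε_def]; linarith
  set E : ℝ := Real.exp (-2 * (m:ℝ) * ε ^ 2) with hE_def
  set k₂ : ℕ := ⌊p₀ * (m:ℝ)⌋₊ with hk₂_def
  set k₁ : ℕ := ⌈(1 - p₀) * (m:ℝ)⌉₊ with hk₁_def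
  have hp₀pos : 0 < p₀ := by
    have : 0 < 1 / (m:ℝ) := by positivity
    linarith
  have hp₀m1 : 1 < p₀ * m := by
    have h1 : (1 / (m:ℝ)) * m = 1 := by field_simp
    nlinarith
  have hk₂1 : 1 ≤ k₂ := Nat.le_floor (by push_cast; linarith)
  have hk₂m : k₂ ≤ m := by
    have h1 : (k₂:ℝ) ≤ p₀ * m := Nat.floor_le (by positivity)
    have h2 : p₀ * m ≤ m := by nlinarith
    exact_mod_cast h1.trans h2
  have hk₁1 : 1 ≤ k₁ := by
    rw [hk₁_def]
    exact Nat.one_le_iff_ne_zero.mpr (by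
      simp only [ne_eq, Nat.ceil_eq_zero, not_le]
      nlinarith)
  have hk₁m : k₁ ≤ m := Nat.ceil_le.mpr (by nlinarith)
  have hk₂k₁ : k₂ ≤ k₁ := by
    have h1 : (k₂:ℝ) ≤ p₀ * m := Nat.floor_le (by positivity)
    have h2 : (1 - p₀) * m ≤ (k₁:ℝ) := Nat.le_ceil _
    have : (k₂:ℝ) ≤ (k₁:ℝ) := by nlinarith
    exact_mod_cast this
  -- threshold bounds
  have hthr₂ : (q + ε) * m ≤ (k₂:ℝ) := by
    have h1 : p₀ * m - 1 < (k₂:ℝ) := Nat.sub_one_lt_floor _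
    have h2 : (q + ε) * m = p₀ * m - 1 := by
      rw [hε_def]; field_simp; ring
    linarith
  have hthr₁ : (q + ε) * m ≤ ((m - k₁ : ℕ):ℝ) + 1 := by
    have hcast : ((m - k₁ : ℕ):ℝ) = (m:ℝ) - k₁ := by
      push_cast [hk₁m]; ring
    have h1 : (k₁:ℝ) < (1 - p₀) * m + 1 := Nat.ceil_lt_add_one (by nlinarith)
    have h2 : (q + ε) * m = p₀ * m - 1 := by
      rw [hε_def]; field_simp; ring
    rw [hcast]; nlinarith
  -- indicator variables
  set X : Fin m → Ω → ℝ := fun j ω => if x₀ ≤ Z j ω then 1 else 0 with hX_def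
  set Y : Fin m → Ω → ℝ := fun j ω => if Z j ω ≤ -x₀ then 1 else 0 with hY_def
  have hgXmeas : Measurable (fun x : ℝ => if x₀ ≤ x then (1:ℝ) else 0) :=
    Measurable.ite measurableSet_Ici measurable_const measurable_const
  have hgYmeas : Measurable (fun x : ℝ => if x ≤ -x₀ then (1:ℝ) else 0) :=
    Measurable.ite measurableSet_Iic measurable_const measurable_const
  have hXmeas : ∀ j, Measurable (X j) := fun j => hgXmeas.comp (hmeas j)
  have hYmeas : ∀ j, Measurable (Y j) := fun j => hgYmeas.comp (hmeas j)
  have hXindep : iIndepFun X P :=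
    hindep.comp (fun _ => fun x : ℝ => if x₀ ≤ x then (1:ℝ) else 0) (fun _ => hgXmeas)
  have hYindep : iIndepFun Y P :=
    hindep.comp (fun _ => fun x : ℝ => if x ≤ -x₀ then (1:ℝ) else 0) (fun _ => hgYmeas)
  have hXq : ∀ j, P {ω | X j ω = 1} ≤ ENNReal.ofReal q := by
    intro j
    have : {ω | X j ω = 1} = {ω | x₀ ≤ Z j ω} := by
      ext ω; by_cases h : x₀ ≤ Z j ω <;> simp [hX_def, h]
    rw [this]; exact hup j
  have hYq : ∀ j, P {ω | Y j ω = 1} ≤ ENNReal.ofReal q := by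
    intro j
    have : {ω | Y j ω = 1} = {ω | Z j ω ≤ -x₀} := by
      ext ω; by_cases h : Z j ω ≤ -x₀ <;> simp [hY_def, h]
    rw [this]; exact hdown j
  have hq1 : q ≤ 1 := by linarith
  have hupBound := bernoulli_chernoff P X hXmeas
    (fun j ω => by by_cases h : x₀ ≤ Z j ω <;> simp [hX_def, h]) hXindep q hq.le hq1 hXq ε hε.le
  have hdownBound := bernoulli_chernoff P Y hYmeas
    (fun j ω => by by_cases h : Z j ω ≤ -x₀ <;> simp [hY_def, h]) hYindep q hq.le hq1 hYq ε hε.le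
  set Up : Set Ω := {ω | (q + ε) * m ≤ ∑ j, X j ω} with hUp_def
  set Down : Set Ω := {ω | (q + ε) * m ≤ ∑ j, Y j ω} with hDown_def
  set G : Set Ω := {ω |
      -x₀ < ordStat (Multiset.map (fun j => Z j ω) Finset.univ.val) k₁
      ∧ ordStat (Multiset.map (fun j => Z j ω) Finset.univ.val) k₁
          ≤ ordStat (Multiset.map (fun j => Z j ω) Finset.univ.val) k₂
      ∧ ordStat (Multiset.map (fun j => Z j ω) Finset.univ.val) k₂ < x₀} with hG_def
  -- key pointwise claim
  have hpoint : ∀ ω, ω ∉ Up → ω ∉ Down → ω ∈ G := by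
    intro ω hωu hωd
    set s : Multiset ℝ := Multiset.map (fun j => Z j ω) Finset.univ.val with hs_def
    set l : List ℝ := s.sort (· ≤ ·) with hl_def
    have hcard : Multiset.card s = m := by
      rw [hs_def, Multiset.card_map]
      exact Finset.card_univ.trans (Fintype.card_fin m)
    have hlen : l.length = m := by rw [hl_def, Multiset.length_sort, hcard]
    have hsort : l.Pairwise (· ≤ ·) := by exact Multiset.pairwise_sort ..
    have hord : ∀ t, ordStat s t = l.getD (m - t) 0 := by
      intro t; rw [ordStat, hcard]
    -- counting identities
    have hcountX : (l.countP (fun y => decide (x₀ ≤ y)) : ℝ) = ∑ j, X j ω := by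
      have h1 : l.countP (fun y => decide (x₀ ≤ y))
          = Multiset.countP (fun y => x₀ ≤ y) s := by
        rw [← Multiset.coe_countP, hl_def, Multiset.sort_eq]
      have h2 : Multiset.countP (fun y => x₀ ≤ y) s
          = (Finset.univ.filter (fun j => x₀ ≤ Z j ω)).card := by
        rw [hs_def, Multiset.countP_map]; rfl
      rw [h1, h2, ← Finset.sum_boole]
    have hcountY : (l.countP (fun z => decide (z ≤ -x₀)) : ℝ) = ∑ j, Y j ω := by
      have h1 : l.countP (fun z => decide (z ≤ -x₀))
          = Multiset.countP (fun z => z ≤ -x₀) s := by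
        rw [← Multiset.coe_countP, hl_def, Multiset.sort_eq]
      have h2 : Multiset.countP (fun z => z ≤ -x₀) s
          = (Finset.univ.filter (fun j => Z j ω ≤ -x₀)).card := by
        rw [hs_def, Multiset.countP_map]; rfl
      rw [h1, h2, ← Finset.sum_boole]
    refine ⟨?_, ?_, ?_⟩
    · -- -x₀ < ordStat s k₁
      by_contra hcon
      push_neg at hcon
      rw [hord] at hcon
      have hi : m - k₁ < l.length := by rw [hlen]; omega
      have := count_ge_of_getD_le l hsort (m - k₁) hi (-x₀) hcon
      apply hωd
      rw [hDown_def]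
      refine Set.mem_setOf_eq ▸ hthr₁.trans ?_
      rw [← hcountY]
      have : ((m - k₁ : ℕ):ℝ) + 1 ≤ (l.countP (fun z => decide (z ≤ -x₀)) : ℝ) := by
        exact_mod_cast this
      exact this
    · -- middle
      rw [hord, hord]
      exact getD_mono_of_sorted l hsort (m - k₁) (m - k₂) (by omega) (by rw [hlen]; omega)
    · -- ordStat s k₂ < x₀
      by_contra hcon
      push_neg at hcon
      rw [hord] at hcon
      have hi : m - k₂ < l.length := by rw [hlen]; omega
      have hcnt := count_ge_of_getD_ge l hsort (m - k₂) hi x₀ hcon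
      apply hωu
      rw [hUp_def]
      refine Set.mem_setOf_eq ▸ hthr₂.trans ?_
      rw [← hcountX]
      have hk : l.length - (m - k₂) = k₂ := by rw [hlen]; omega
      rw [hk] at hcnt
      exact_mod_cast hcnt
  -- measure arithmetic
  have hcover : (Set.univ : Set Ω) ⊆ Up ∪ (Down ∪ G) := by
    intro ω _
    by_cases h1 : ω ∈ Up
    · exact Or.inl h1
    by_cases h2 : ω ∈ Down
    · exact Or.inr (Or.inl h2)
    exact Or.inr (Or.inr (hpoint ω h1 h2))
  have h1le : (1 : ℝ≥0∞) ≤ P Up + (P Down + P G) := by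
    calc (1:ℝ≥0∞) = P Set.univ := (measure_univ).symm
      _ ≤ P (Up ∪ (Down ∪ G)) := measure_mono hcover
      _ ≤ P Up + P (Down ∪ G) := measure_union_le _ _
      _ ≤ P Up + (P Down + P G) := by gcongr; exact measure_union_le _ _
  have hfinal : ENNReal.ofReal (1 - 2 * E) ≤ P G := by
    have hEpos : 0 ≤ 2 * E := by positivity
    have h2 : ENNReal.ofReal (1 - 2 * E) = 1 - ENNReal.ofReal (2 * E) := by
      rw [ENNReal.ofReal_sub _ hEpos, ENNReal.ofReal_one]
    have h3 : P Up + P Down ≤ ENNReal.ofReal (2 * E) := by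
      calc P Up + P Down ≤ ENNReal.ofReal E + ENNReal.ofReal E :=
            add_le_add hupBound hdownBound
        _ = ENNReal.ofReal (2 * E) := by
            rw [← ENNReal.ofReal_add (by positivity) (by positivity)]; ring_nf
    rw [h2]
    refine le_trans (tsub_le_tsub_left h3 1) ?_
    rw [tsub_le_iff_left, add_assoc]
    exact h1le
  exact hfinal
end

section
/- Let g ~ N(0, σ² I_{d×d}) be a standard Gaussian vector in ℝ^d scaled by σ, let C_0 > 0, and let v ∈ ℝ^d satisfy ‖v‖₂ = Δ and |v_j| > 2C_0σ for every coordinate j = 1,…,d. Let u_1, u_2 be random vectors in ℝ^d, possibly depending on g (i.e. measurable functions of g), with ‖u_1‖₂ ≤ C_0σ and ‖u_2‖₂ ≤ C_0σ almost surely. Then there exist constants C_4, C_5 > 0 depending only on C_0 such that P[ ‖g + u_2‖₁ ≥ ‖g + v + u_1‖₁ ] ≥ exp{ −( Δ² + C_4 σ Δ √d + C_5 d σ² ) / (8σ²) }. -/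
open MeasureTheory ProbabilityTheory Finset

lemma cauchy_abs_sum {d : ℕ} (f : Fin d → ℝ) :
    ∑ j, |f j| ≤ Real.sqrt d * Real.sqrt (∑ j, (f j) ^ 2) := by
  have h := sum_mul_sq_le_sq_mul_sq Finset.univ (fun _ : Fin d => (1 : ℝ)) (fun j => |f j|)
  simp only [one_mul, one_pow, sum_const, card_univ, Fintype.card_fin, nsmul_eq_mul, mul_one,
    sq_abs] at h
  have h0 : 0 ≤ ∑ j, |f j| := Finset.sum_nonneg fun j _ => abs_nonneg _
  have h2 := Real.sqrt_le_sqrt h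
  rwa [Real.sqrt_sq h0, Real.sqrt_mul (by positivity)] at h2

lemma gauss_interval_lb (σ : ℝ) (hσ : 0 < σ) (b w : ℝ)
    (hw : ∀ x ∈ Set.Icc b (b + σ), x ^ 2 ≤ w ^ 2) :
    ENNReal.ofReal (Real.exp (-w ^ 2 / (2 * σ ^ 2)) / Real.sqrt (2 * Real.pi)) ≤
      (gaussianReal 0 ((σ ^ 2).toNNReal)) (Set.Icc b (b + σ)) := by
  have hσ2 : (0:ℝ) < σ ^ 2 := by positivity
  have hv : ((σ ^ 2).toNNReal) ≠ 0 := by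
    simp only [ne_eq, Real.toNNReal_eq_zero, not_le]; exact hσ2
  have hvr : ((σ ^ 2).toNNReal : ℝ) = σ ^ 2 := Real.coe_toNNReal _ (le_of_lt hσ2)
  rw [gaussianReal_apply 0 hv]
  have key : ∀ x ∈ Set.Icc b (b + σ),
      ENNReal.ofReal ((Real.sqrt (2 * Real.pi * σ ^ 2))⁻¹ * Real.exp (-w ^ 2 / (2 * σ ^ 2)))
        ≤ gaussianPDF 0 ((σ ^ 2).toNNReal) x := by
    intro x hx
    rw [gaussianPDF, gaussianPDFReal, hvr]
    apply ENNReal.ofReal_le_ofReal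
    have hxw : x ^ 2 ≤ w ^ 2 := hw x hx
    have : Real.exp (-w ^ 2 / (2 * σ ^ 2)) ≤ Real.exp (-(x - 0) ^ 2 / (2 * σ ^ 2)) := by
      apply Real.exp_le_exp.mpr
      rw [sub_zero]
      exact div_le_div_of_nonneg_right (by linarith) (by positivity)
    exact mul_le_mul_of_nonneg_left this (by positivity)
  calc ENNReal.ofReal (Real.exp (-w ^ 2 / (2 * σ ^ 2)) / Real.sqrt (2 * Real.pi))
      = ENNReal.ofReal ((Real.sqrt (2 * Real.pi * σ ^ 2))⁻¹ *
          Real.exp (-w ^ 2 / (2 * σ ^ 2))) * ENNReal.ofReal σ := by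
        rw [← ENNReal.ofReal_mul (by positivity)]
        congr 1
        have hs : Real.sqrt (2 * Real.pi * σ ^ 2) = Real.sqrt (2 * Real.pi) * σ := by
          rw [Real.sqrt_mul (by positivity), Real.sqrt_sq hσ.le]
        have h2π : (0:ℝ) < Real.sqrt (2 * Real.pi) := Real.sqrt_pos.mpr (by positivity)
        rw [hs]
        field_simp
    _ = ∫⁻ _ in Set.Icc b (b + σ),
          ENNReal.ofReal ((Real.sqrt (2 * Real.pi * σ ^ 2))⁻¹ *
            Real.exp (-w ^ 2 / (2 * σ ^ 2))) := by
        rw [setLIntegral_const, Real.volume_Icc]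
        congr 1
        ring_nf
    _ ≤ ∫⁻ x in Set.Icc b (b + σ), gaussianPDF 0 ((σ ^ 2).toNNReal) x :=
        setLIntegral_mono' measurableSet_Icc key

lemma coord_lb (C₀ σ : ℝ) (hC₀ : 0 < C₀) (hσ : 0 < σ) (vj : ℝ) (hvj : 2 * C₀ * σ < |vj|) :
    ENNReal.ofReal
        (Real.exp (-(|vj| / 2 + (C₀ + 1) * σ) ^ 2 / (2 * σ ^ 2)) / Real.sqrt (2 * Real.pi)) ≤
      gaussianReal 0 ((σ ^ 2).toNNReal)
        (if 0 < vj then Set.Iic (-vj / 2 - C₀ * σ) else Set.Ici (-vj / 2 + C₀ * σ)) := by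
  have hcs : 0 < C₀ * σ := mul_pos hC₀ hσ
  by_cases h : 0 < vj
  · rw [if_pos h]
    have habs : |vj| = vj := abs_of_pos h
    refine le_trans (gauss_interval_lb σ hσ (-vj / 2 - C₀ * σ - σ)
      (|vj| / 2 + (C₀ + 1) * σ) ?_) (measure_mono ?_)
    · intro x hx
      obtain ⟨hx1, hx2⟩ := hx
      apply sq_le_sq'
      · rw [habs]; linarith
      · rw [habs]; nlinarith
    · intro x hx
      obtain ⟨_, hx2⟩ := hx
      simp only [Set.mem_Iic]; linarith
  · rw [if_neg h]
    have hvneg : vj < 0 := by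
      rcases (not_lt.mp h).lt_or_eq with h' | h'
      · exact h'
      · exfalso; rw [h'] at hvj; simp at hvj; nlinarith
    have habs : |vj| = -vj := abs_of_neg hvneg
    refine le_trans (gauss_interval_lb σ hσ (-vj / 2 + C₀ * σ)
      (|vj| / 2 + (C₀ + 1) * σ) ?_) (measure_mono ?_)
    · intro x hx
      obtain ⟨hx1, hx2⟩ := hx
      apply sq_le_sq'
      · rw [habs]; nlinarith
      · rw [habs]; linarith
    · intro x hx
      exact hx.1

set_option maxHeartbeats 1000000 in
/-- let `g ~ N(0, σ²I_d)`, `C₀ > 0`, `v ∈ ℝ^d` with `‖v‖₂ = Δ` and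
`|v_j| > 2C₀σ` for all `j`, and let `u₁, u₂` be (measurable functions of `g`) random
vectors with `‖u₁‖₂, ‖u₂‖₂ ≤ C₀σ` almost surely.  Then there are constants `C₄, C₅ > 0`
depending only on `C₀` with
`P[‖g+u₂‖₁ ≥ ‖g+v+u₁‖₁] ≥ exp(−(Δ² + C₄σΔ√d + C₅dσ²)/(8σ²))`. -/
theorem ell1_mislabel_probability_lower_bound
    (C₀ : ℝ) (hC₀ : 0 < C₀) :
    ∃ C₄ C₅ : ℝ, 0 < C₄ ∧ 0 < C₅ ∧
      ∀ (d : ℕ) (_hd : 0 < d) (σ Δ : ℝ) (_hσ : 0 < σ)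
        (v : Fin d → ℝ) (u₁ u₂ : (Fin d → ℝ) → Fin d → ℝ),
        Real.sqrt (∑ j, (v j) ^ 2) = Δ →
        (∀ j, 2 * C₀ * σ < |v j|) →
        (∀ᵐ x ∂(Measure.pi fun _ : Fin d => gaussianReal 0 ((σ ^ 2).toNNReal)),
          Real.sqrt (∑ j, (u₁ x j) ^ 2) ≤ C₀ * σ) →
        (∀ᵐ x ∂(Measure.pi fun _ : Fin d => gaussianReal 0 ((σ ^ 2).toNNReal)),
          Real.sqrt (∑ j, (u₂ x j) ^ 2) ≤ C₀ * σ) →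
        ENNReal.ofReal
            (Real.exp (-(Δ ^ 2 + C₄ * σ * Δ * Real.sqrt d + C₅ * d * σ ^ 2) / (8 * σ ^ 2)))
          ≤ (Measure.pi fun _ : Fin d => gaussianReal 0 ((σ ^ 2).toNNReal))
              {x | ∑ j, |x j + v j + u₁ x j| ≤ ∑ j, |x j + u₂ x j|} := by
  have h2π : (1:ℝ) < 2 * Real.pi := by nlinarith [Real.pi_gt_three]
  have hlog : 0 < Real.log (2 * Real.pi) := Real.log_pos h2π
  refine ⟨4 * (C₀ + 1), 4 * (C₀ + 1) ^ 2 + 4 * Real.log (2 * Real.pi), by positivity,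
    by nlinarith [sq_nonneg (C₀ + 1)], ?_⟩
  intro d hd σ Δ hσ v u₁ u₂ hΔ hv h₁ h₂
  set μ := Measure.pi fun _ : Fin d => gaussianReal 0 ((σ ^ 2).toNNReal) with hμ
  have hcs : 0 < C₀ * σ := mul_pos hC₀ hσ
  have hΔ0 : 0 ≤ Δ := hΔ ▸ Real.sqrt_nonneg _
  have hΔsq : Δ ^ 2 = ∑ j, (v j) ^ 2 := by
    rw [← hΔ, Real.sq_sqrt]
    exact Finset.sum_nonneg fun j _ => sq_nonneg _
  have hsumv : ∑ j, |v j| ≤ Real.sqrt d * Δ := by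
    have := cauchy_abs_sum v; rwa [hΔ] at this
  have h1d : (1:ℝ) ≤ d := by exact_mod_cast hd
  have hsd : Real.sqrt d ≤ (d:ℝ) := by
    have h := Real.sqrt_le_sqrt (show (d:ℝ) ≤ (d:ℝ) ^ 2 by nlinarith)
    rwa [Real.sqrt_sq (by positivity)] at h
  have hsd0 : 0 ≤ Real.sqrt d := Real.sqrt_nonneg _
  set S : Fin d → Set ℝ := fun j =>
    if 0 < v j then Set.Iic (-v j / 2 - C₀ * σ) else Set.Ici (-v j / 2 + C₀ * σ) with hS
  -- a.e. inclusion of events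
  have hmono : μ (Set.univ.pi S) ≤
      μ {x | ∑ j, |x j + v j + u₁ x j| ≤ ∑ j, |x j + u₂ x j|} := by
    apply measure_mono_ae
    filter_upwards [h₁, h₂] with x hu₁ hu₂
    intro hx
    have hx' : ∀ j, x j ∈ S j := Set.mem_univ_pi.mp hx
    show ∑ j, |x j + v j + u₁ x j| ≤ ∑ j, |x j + u₂ x j|
    have hgain : ∀ j, 2 * (C₀ * σ) + |x j + v j| ≤ |x j| := by
      intro j
      have hj := hx' j
      have hvj := hv j
      simp only [hS] at hj
      by_cases h : 0 < v j
      · rw [if_pos h] at hj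
        simp only [Set.mem_Iic] at hj
        have hxneg : x j ≤ 0 := by nlinarith
        rw [abs_of_nonpos hxneg]
        have habs : |v j| = v j := abs_of_pos h
        rw [habs] at hvj
        rcases le_total (x j + v j) 0 with hcase | hcase
        · rw [abs_of_nonpos hcase]; linarith
        · rw [abs_of_nonneg hcase]; linarith
      · rw [if_neg h] at hj
        simp only [Set.mem_Ici] at hj
        have hvneg : v j < 0 := by
          rcases (not_lt.mp h).lt_or_eq with h' | h'
          · exact h'
          · exfalso; rw [h'] at hvj; simp at hvj; nlinarith
        have habs : |v j| = -v j := abs_of_neg hvneg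
        rw [habs] at hvj
        have hxpos : 0 ≤ x j := by nlinarith
        rw [abs_of_nonneg hxpos]
        rcases le_total (x j + v j) 0 with hcase | hcase
        · rw [abs_of_nonpos hcase]; linarith
        · rw [abs_of_nonneg hcase]; linarith
    have hA : ∑ j, |x j + v j + u₁ x j| ≤ (∑ j, |x j + v j|) + ∑ j, |u₁ x j| := by
      rw [← Finset.sum_add_distrib]
      exact Finset.sum_le_sum fun j _ => abs_add_le _ _
    have hBsum : (∑ j, |x j|) - ∑ j, |u₂ x j| ≤ ∑ j, |x j + u₂ x j| := by
      rw [← Finset.sum_sub_distrib]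
      refine Finset.sum_le_sum fun j _ => ?_
      have := abs_sub_abs_le_abs_sub (x j) (-(u₂ x j))
      simpa [sub_neg_eq_add] using this
    have hu1s : ∑ j, |u₁ x j| ≤ Real.sqrt d * (C₀ * σ) :=
      le_trans (cauchy_abs_sum _) (mul_le_mul_of_nonneg_left hu₁ hsd0)
    have hu2s : ∑ j, |u₂ x j| ≤ Real.sqrt d * (C₀ * σ) :=
      le_trans (cauchy_abs_sum _) (mul_le_mul_of_nonneg_left hu₂ hsd0)
    have hgs : (d:ℝ) * (2 * (C₀ * σ)) + ∑ j, |x j + v j| ≤ ∑ j, |x j| := by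
      have h3 := Finset.sum_le_sum (s := Finset.univ) (fun j _ => hgain j)
      simpa [Finset.sum_add_distrib, Finset.sum_const, card_univ, nsmul_eq_mul] using h3
    have hkey : Real.sqrt d * (2 * (C₀ * σ)) ≤ (d:ℝ) * (2 * (C₀ * σ)) :=
      mul_le_mul_of_nonneg_right hsd (by positivity)
    linarith
  -- lower bound for the measure of the product set
  have hcoord : ∀ j : Fin d,
      ENNReal.ofReal (Real.exp (-(|v j| / 2 + (C₀ + 1) * σ) ^ 2 / (2 * σ ^ 2)) /
        Real.sqrt (2 * Real.pi)) ≤ gaussianReal 0 ((σ ^ 2).toNNReal) (S j) := by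
    intro j
    simp only [hS]
    exact coord_lb C₀ σ hC₀ hσ (v j) (hv j)
  have hpi : μ (Set.univ.pi S) = ∏ j, gaussianReal 0 ((σ ^ 2).toNNReal) (S j) :=
    Measure.pi_pi _ _
  -- the real-number inequality
  have hrineq : Real.exp (-(Δ ^ 2 + 4 * (C₀ + 1) * σ * Δ * Real.sqrt d +
        (4 * (C₀ + 1) ^ 2 + 4 * Real.log (2 * Real.pi)) * d * σ ^ 2) / (8 * σ ^ 2)) ≤
      ∏ j, (Real.exp (-(|v j| / 2 + (C₀ + 1) * σ) ^ 2 / (2 * σ ^ 2)) /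
        Real.sqrt (2 * Real.pi)) := by
    have hsqrt2π : (0:ℝ) < Real.sqrt (2 * Real.pi) := Real.sqrt_pos.mpr (by positivity)
    have hfac : ∀ j : Fin d, Real.exp (-(|v j| / 2 + (C₀ + 1) * σ) ^ 2 / (2 * σ ^ 2)) /
        Real.sqrt (2 * Real.pi) =
        Real.exp (-(|v j| / 2 + (C₀ + 1) * σ) ^ 2 / (2 * σ ^ 2) -
          Real.log (Real.sqrt (2 * Real.pi))) := by
      intro j; rw [Real.exp_sub, Real.exp_log hsqrt2π]
    simp_rw [hfac, ← Real.exp_sum]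
    apply Real.exp_le_exp.mpr
    have hL : Real.log (Real.sqrt (2 * Real.pi)) = Real.log (2 * Real.pi) / 2 :=
      Real.log_sqrt (by positivity)
    have hsum_eq : ∑ j : Fin d, (-(|v j| / 2 + (C₀ + 1) * σ) ^ 2 / (2 * σ ^ 2) -
        Real.log (Real.sqrt (2 * Real.pi))) =
        -((∑ j, (|v j| / 2 + (C₀ + 1) * σ) ^ 2) / (2 * σ ^ 2)) -
          d * (Real.log (2 * Real.pi) / 2) := by
      rw [Finset.sum_sub_distrib, Finset.sum_const, card_univ, Fintype.card_fin, hL,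
        nsmul_eq_mul]
      congr 1
      rw [← Finset.sum_div, ← neg_div, ← Finset.sum_neg_distrib]
    rw [hsum_eq]
    have hexpand : ∑ j, (|v j| / 2 + (C₀ + 1) * σ) ^ 2 =
        (∑ j, (v j) ^ 2) / 4 + (C₀ + 1) * σ * (∑ j, |v j|) + d * ((C₀ + 1) ^ 2 * σ ^ 2) := by
      have heach : ∀ j : Fin d, (|v j| / 2 + (C₀ + 1) * σ) ^ 2 =
          (v j) ^ 2 / 4 + (C₀ + 1) * σ * |v j| + (C₀ + 1) ^ 2 * σ ^ 2 := by
        intro j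
        have h := sq_abs (v j)
        nlinarith [sq_abs (v j)]
      simp_rw [heach]
      rw [Finset.sum_add_distrib, Finset.sum_add_distrib, Finset.sum_const, card_univ,
        Fintype.card_fin, nsmul_eq_mul, ← Finset.sum_div, ← Finset.mul_sum]
    rw [hexpand, ← hΔsq]
    have hfrac : -((Δ ^ 2 / 4 + (C₀ + 1) * σ * (∑ j, |v j|) + d * ((C₀ + 1) ^ 2 * σ ^ 2)) /
          (2 * σ ^ 2)) - d * (Real.log (2 * Real.pi) / 2) =
        (-(4 * (Δ ^ 2 / 4 + (C₀ + 1) * σ * (∑ j, |v j|) + d * ((C₀ + 1) ^ 2 * σ ^ 2))) -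
          4 * d * σ ^ 2 * Real.log (2 * Real.pi)) / (8 * σ ^ 2) := by
      field_simp
      ring
    rw [hfrac, div_le_div_iff_of_pos_right (by positivity)]
    have hTm : (C₀ + 1) * σ * (∑ j, |v j|) ≤ (C₀ + 1) * σ * (Real.sqrt d * Δ) := by
      apply mul_le_mul_of_nonneg_left hsumv (by positivity)
    ring_nf
    ring_nf at hTm
    linarith
  -- put everything together
  calc ENNReal.ofReal (Real.exp (-(Δ ^ 2 + 4 * (C₀ + 1) * σ * Δ * Real.sqrt d +
        (4 * (C₀ + 1) ^ 2 + 4 * Real.log (2 * Real.pi)) * d * σ ^ 2) / (8 * σ ^ 2)))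
      ≤ ENNReal.ofReal (∏ j, (Real.exp (-(|v j| / 2 + (C₀ + 1) * σ) ^ 2 / (2 * σ ^ 2)) /
          Real.sqrt (2 * Real.pi))) := ENNReal.ofReal_le_ofReal hrineq
    _ = ∏ j, ENNReal.ofReal (Real.exp (-(|v j| / 2 + (C₀ + 1) * σ) ^ 2 / (2 * σ ^ 2)) /
          Real.sqrt (2 * Real.pi)) :=
        ENNReal.ofReal_prod_of_nonneg fun j _ => by positivity
    _ ≤ ∏ j, gaussianReal 0 ((σ ^ 2).toNNReal) (S j) :=
        Finset.prod_le_prod' fun j _ => hcoord j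
    _ = μ (Set.univ.pi S) := hpi.symm
    _ ≤ μ {x | ∑ j, |x j + v j + u₁ x j| ≤ ∑ j, |x j + u₂ x j|} := hmono
end

section
/- Let U be a finite multiset of n real numbers and V ⊆ U a sub-multiset with |V| = m. Suppose m > (1/2 + γ)n for some γ ∈ (0, 1/2] with ⌊γn⌋ ≥ 1. Define the median of a multiset of size r as its ⌈r/2⌉-th largest element. Then both median(U) and median(V) lie in the interval [V^{(⌈n/2⌉)}, V^{(⌊γn⌋)}], and hence |median(U) − median(V)| ≤ V^{(⌊γn⌋)} − V^{(⌈n/2⌉)}. -/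
/-- The median of a multiset of size `r`, defined as its `⌈r/2⌉`-th largest element. -/
noncomputable def msMedian (s : Multiset ℝ) : ℝ := ordStat s ((Multiset.card s + 1) / 2)

lemma ordStat_eq_get (s : Multiset ℝ) (t : ℕ) (h : Multiset.card s - t < (s.sort (· ≤ ·)).length) :
    ordStat s t = (s.sort (· ≤ ·)).get ⟨Multiset.card s - t, h⟩ := by
  rw [ordStat, List.getD_eq_getElem _ _ h]
  simp

lemma ordStat_anti (s : Multiset ℝ) {a b : ℕ} (hb : 1 ≤ b) (hba : b ≤ a)
    (ha : a ≤ Multiset.card s) : ordStat s a ≤ ordStat s b := by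
  have hlen : (s.sort (· ≤ ·)).length = Multiset.card s := Multiset.length_sort _
  have h1 : Multiset.card s - a < (s.sort (· ≤ ·)).length := by omega
  have h2 : Multiset.card s - b < (s.sort (· ≤ ·)).length := by omega
  rw [ordStat_eq_get s a h1, ordStat_eq_get s b h2]
  exact (Multiset.pairwise_sort s _).rel_get_of_le (by simp [Fin.le_def]; omega)

lemma sort_sublist {V U : Multiset ℝ} (hVU : V ≤ U) :
    List.Sublist (V.sort (· ≤ ·)) (U.sort (· ≤ ·)) := by
  apply List.sublist_of_subperm_of_pairwise _ (Multiset.pairwise_sort V _) (Multiset.pairwise_sort U _)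
  rw [← Multiset.coe_le, Multiset.sort_eq, Multiset.sort_eq]
  exact hVU

/-- Index mapping for a sublist: `lV.get i = lU.get (f i)` with `i ≤ f i ≤ i + (|lU| - |lV|)`. -/
lemma sublist_get_bounds {lV lU : List ℝ} (h : List.Sublist lV lU) (i : ℕ) (hi : i < lV.length) :
    ∃ j, ∃ hj : j < lU.length, i ≤ j ∧ j ≤ i + (lU.length - lV.length) ∧
      lV.get ⟨i, hi⟩ = lU.get ⟨j, hj⟩ := by
  obtain ⟨f, hf⟩ := List.sublist_iff_exists_fin_orderEmbedding_get_eq.mp h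
  have haux : ∀ k (a : Fin lV.length) (hk : (a : ℕ) + k < lV.length),
      (f a : ℕ) + k ≤ (f ⟨(a : ℕ) + k, hk⟩ : ℕ) := by
    intro k
    induction k with
    | zero => intro a hk; simp
    | succ k ih =>
      intro a hk
      have hk' : (a : ℕ) + k < lV.length := by omega
      have h1 := ih a hk'
      have h2 : (f ⟨(a : ℕ) + k, hk'⟩ : ℕ) < (f ⟨(a : ℕ) + (k+1), hk⟩ : ℕ) := by
        apply f.strictMono
        simp [Fin.lt_def]
      omega
  have hga : ∀ a : Fin lV.length, (a : ℕ) ≤ (f a : ℕ) := by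
    intro a
    have h0 := haux (a : ℕ) ⟨0, by omega⟩ (by simpa using a.isLt)
    have heq : (⟨(0 : ℕ) + (a : ℕ), by simpa using a.isLt⟩ : Fin lV.length) = a := by
      apply Fin.ext; simp
    rw [heq] at h0
    omega
  have hb := haux (lV.length - 1 - i) ⟨i, hi⟩ (by simp; omega)
  have hlast := (f ⟨(⟨i, hi⟩ : Fin lV.length) + (lV.length - 1 - i), by simp; omega⟩).isLt
  refine ⟨f ⟨i, hi⟩, (f ⟨i, hi⟩).isLt, hga ⟨i, hi⟩, ?_, hf ⟨i, hi⟩⟩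
  have := hga ⟨i, hi⟩
  simp at hb hlast this ⊢
  omega

lemma ordStat_le_ordStat {V U : Multiset ℝ} (hVU : V ≤ U) {t : ℕ} (ht1 : 1 ≤ t)
    (ht : t ≤ Multiset.card V) : ordStat V t ≤ ordStat U t := by
  have hsl := sort_sublist hVU
  have hlenV : (V.sort (· ≤ ·)).length = Multiset.card V := Multiset.length_sort _
  have hlenU : (U.sort (· ≤ ·)).length = Multiset.card U := Multiset.length_sort _
  have hmn : Multiset.card V ≤ Multiset.card U := Multiset.card_le_card hVU
  have hi : Multiset.card V - t < (V.sort (· ≤ ·)).length := by omega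
  obtain ⟨j, hj, hij, hij2, heq⟩ := sublist_get_bounds hsl _ hi
  rw [ordStat_eq_get V t hi, heq, ordStat_eq_get U t (by omega)]
  apply (Multiset.pairwise_sort U _).rel_get_of_le
  simp [Fin.le_def]; omega

lemma ordStat_ge_ordStat {V U : Multiset ℝ} (hVU : V ≤ U) {t : ℕ} (ht1 : 1 ≤ t)
    (ht : t ≤ Multiset.card V) :
    ordStat U (t + (Multiset.card U - Multiset.card V)) ≤ ordStat V t := by
  have hsl := sort_sublist hVU
  have hlenV : (V.sort (· ≤ ·)).length = Multiset.card V := Multiset.length_sort _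
  have hlenU : (U.sort (· ≤ ·)).length = Multiset.card U := Multiset.length_sort _
  have hmn : Multiset.card V ≤ Multiset.card U := Multiset.card_le_card hVU
  have hi : Multiset.card V - t < (V.sort (· ≤ ·)).length := by omega
  obtain ⟨j, hj, hij, hij2, heq⟩ := sublist_get_bounds hsl _ hi
  rw [ordStat_eq_get V t hi, heq,
    ordStat_eq_get U (t + (Multiset.card U - Multiset.card V)) (by omega)]
  apply (Multiset.pairwise_sort U _).rel_get_of_le
  simp [Fin.le_def]; omega

/-- if `V` is a sub-multiset of `U` (|U| = n, |V| = m) containing a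
`(1/2 + γ)`-majority of `U` with `γ ∈ (0, 1/2]` and `⌊γn⌋ ≥ 1`, then both `median U`
and `median V` lie in `[V^{(⌈n/2⌉)}, V^{(⌊γn⌋)}]`, hence
`|median U − median V| ≤ V^{(⌊γn⌋)} − V^{(⌈n/2⌉)}`. -/
theorem median_robustness
    (U V : Multiset ℝ) (n m : ℕ) (γ : ℝ)
    (hVU : V ≤ U) (hU : Multiset.card U = n) (hV : Multiset.card V = m)
    (hγ : 0 < γ) (hγ' : γ ≤ 1 / 2)
    (hm : (1 / 2 + γ) * (n : ℝ) < (m : ℝ))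
    (hfloor : 1 ≤ ⌊γ * (n : ℝ)⌋₊) :
    (ordStat V ((n + 1) / 2) ≤ msMedian U ∧ msMedian U ≤ ordStat V ⌊γ * (n : ℝ)⌋₊) ∧
    (ordStat V ((n + 1) / 2) ≤ msMedian V ∧ msMedian V ≤ ordStat V ⌊γ * (n : ℝ)⌋₊) ∧
    |msMedian U - msMedian V| ≤ ordStat V ⌊γ * (n : ℝ)⌋₊ - ordStat V ((n + 1) / 2) := by
  set g : ℕ := ⌊γ * (n : ℝ)⌋₊ with hg
  have hmn : m ≤ n := by
    have := Multiset.card_le_card hVU; omega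
  have hgle : (g : ℝ) ≤ γ * n := Nat.floor_le (by positivity)
  have hn0 : 0 < n := by
    rcases Nat.eq_zero_or_pos n with h | h
    · subst h; simp [hg] at hfloor
    · exact h
  -- key nat inequalities from reals
  have hcast : ((n - m : ℕ) : ℝ) = (n : ℝ) - m := by
    rw [Nat.cast_sub hmn]
  have key1 : 2 * (g + (n - m)) < n := by
    have : (2 * (g + (n - m)) : ℕ) < (n : ℕ) := by
      have hr : ((2 * (g + (n - m)) : ℕ) : ℝ) < (n : ℝ) := by
        push_cast [Nat.cast_sub hmn]
        nlinarith [(by exact_mod_cast hn0 : (0:ℝ) < n)]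
      exact_mod_cast hr
    exact this
  have key2 : 2 * g < m := by
    have hr : ((2 * g : ℕ) : ℝ) < (m : ℝ) := by
      push_cast
      nlinarith [(by positivity : (0:ℝ) ≤ (n:ℝ))]
    exact_mod_cast hr
  have key3 : n < 2 * m := by
    have hr : ((n : ℕ) : ℝ) < ((2 * m : ℕ) : ℝ) := by
      push_cast
      nlinarith [(by exact_mod_cast hn0 : (0:ℝ) < n)]
    exact_mod_cast hr
  have hg1 : 1 ≤ g := hfloor
  set h : ℕ := (n + 1) / 2 with hh
  set h' : ℕ := (m + 1) / 2 with hh'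
  have hhm : h ≤ m := by omega
  have hmU : msMedian U = ordStat U h := by rw [msMedian, hU]
  have hmV : msMedian V = ordStat V h' := by rw [msMedian, hV]
  -- A lower
  have A1 : ordStat V h ≤ msMedian U := by
    rw [hmU]
    exact ordStat_le_ordStat hVU (by omega) (by omega)
  -- A upper
  have A2 : msMedian U ≤ ordStat V g := by
    rw [hmU]
    have s1 : ordStat U h ≤ ordStat U (g + (n - m)) := by
      apply ordStat_anti U (by omega) (by omega) (by omega)
    have s2 : ordStat U (g + (Multiset.card U - Multiset.card V)) ≤ ordStat V g :=
      ordStat_ge_ordStat hVU (by omega) (by omega)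
    rw [hU, hV] at s2
    exact le_trans s1 s2
  -- B lower
  have B1 : ordStat V h ≤ msMedian V := by
    rw [hmV]
    exact ordStat_anti V (by omega) (by omega) (by omega)
  -- B upper
  have B2 : msMedian V ≤ ordStat V g := by
    rw [hmV]
    exact ordStat_anti V (by omega) (by omega) (by omega)
  refine ⟨⟨A1, A2⟩, ⟨B1, B2⟩, ?_⟩
  rw [abs_sub_le_iff]
  constructor <;> linarith
end
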